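/- Let A ∈ ℍ^{n×n}, q a right eigenvalue, and λ_q the unique complex number with Im(λ_q) ≥ 0 similar to q. Then the geometric multiplicity g.m.(q,A) := dim_ℍ V_{[q]} satisfies: g.m.(q,A) = g.m.(λ_q, f(A)) if Im(λ_q) > 0, and g.m.(q,A) = (1/2)·g.m.(λ_q, f(A)) if λ_q is real. -/

import Mathlib

open Quaternion Matrix

noncomputable section

/-- The copy of a complex number inside the quaternions (span of 1 and i). -/
def toQ (z : ℂ) : ℍ[ℝ] := ⟨z.re, z.im, 0, 0⟩

/-- First complex component of a quaternion: a = c1 a + (c2 a)·j. -/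
def c1 (a : ℍ[ℝ]) : ℂ := ⟨a.re, a.imI⟩
/-- Second complex component of a quaternion. -/
def c2 (a : ℍ[ℝ]) : ℂ := ⟨a.imJ, a.imK⟩

/-- Similarity of quaternions: p = h⁻¹ q h for some nonzero h. -/
def qSimilar (p q : ℍ[ℝ]) : Prop := ∃ h : ℍ[ℝ], h ≠ 0 ∧ p = h⁻¹ * q * h

/-- q is a right eigenvalue of A. -/
def RightEig {n : ℕ} (A : Matrix (Fin n) (Fin n) ℍ[ℝ]) (q : ℍ[ℝ]) : Prop :=
  ∃ x : Fin n → ℍ[ℝ], x ≠ 0 ∧ A.mulVec x = fun i => x i * q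

/-- The complex adjoint matrix of a quaternion matrix. -/
def fAdj {n : ℕ} (A : Matrix (Fin n) (Fin n) ℍ[ℝ]) :
    Matrix (Fin n ⊕ Fin n) (Fin n ⊕ Fin n) ℂ :=
  Matrix.fromBlocks (A.map c1) (A.map c2)
    (-(A.map (fun a => starRingEnd ℂ (c2 a)))) (A.map (fun a => starRingEnd ℂ (c1 a)))

/-- Algebraic multiplicity of an eigenvalue of a complex matrix. -/
def algMult {m : Type*} [Fintype m] [DecidableEq m] (B : Matrix m m ℂ) (μ : ℂ) : ℕ :=
  (Matrix.charpoly B).rootMultiplicity μ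

/-- Geometric multiplicity of an eigenvalue of a complex matrix. -/
def geoMult {m : Type*} [Fintype m] [DecidableEq m] (B : Matrix m m ℂ) (μ : ℂ) : ℕ :=
  Module.finrank ℂ (LinearMap.ker (Matrix.mulVecLin (B - μ • 1)))

/-- The set of right q-eigenvectors (with 0). -/
def eigSet {n : ℕ} (A : Matrix (Fin n) (Fin n) ℍ[ℝ]) (q : ℍ[ℝ]) : Set (Fin n → ℍ[ℝ]) :=
  {x | A.mulVec x = fun i => x i * q}


/-- The [q]-eigenspace as a right ℍ-subspace of ℍⁿ. -/
def Vclass {n : ℕ} (A : Matrix (Fin n) (Fin n) ℍ[ℝ]) (q : ℍ[ℝ]) :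
    Submodule ℍ[ℝ]ᵐᵒᵖ (Fin n → ℍ[ℝ]) :=
  Submodule.span ℍ[ℝ]ᵐᵒᵖ (⋃ q' ∈ {p | qSimilar p q}, eigSet A q')

/-- geometric multiplicity -/
def gm {n : ℕ} (A : Matrix (Fin n) (Fin n) ℍ[ℝ]) (q : ℍ[ℝ]) : ℕ :=
  Module.finrank ℍ[ℝ]ᵐᵒᵖ (Vclass A q)

/-!
Write `x ∈ ℍⁿ` as `x = x₁ + x₂ j` with `x₁, x₂ ∈ ℂⁿ`. The real isomorphism `x ↦ (x₁, -x̄₂)`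
carries `A` to `f(A)`, right multiplication by `z ∈ ℂ` to multiplication by `z`, and right
multiplication by `j` to a conjugate-linear `J` with `J² = -1` commuting with `f(A)`; hence
`J` maps `ker (f(A) - λ)` onto `ker (f(A) - λ̄)`. As `[q]` contains `λ = λ_q`, `V_[q]` is the
`ℍ`-span of the `λ`-eigenvectors, so its image is `ker (f(A) - λ) + ker (f(A) - λ̄)`, and
counting real dimensions gives `4 g.m.(q, A) = 2 dim_ℂ (ker (f(A) - λ) + ker (f(A) - λ̄))`.
For real `λ` the two kernels coincide; otherwise they are independent of equal dimension.
-/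

open Complex ComplexConjugate MulOpposite Module.End

def quatJ : ℍ[ℝ] := ⟨0, 0, 1, 0⟩

@[simp] lemma toQ_re (z : ℂ) : (toQ z).re = z.re := rfl
@[simp] lemma toQ_imI (z : ℂ) : (toQ z).imI = z.im := rfl
@[simp] lemma toQ_imJ (z : ℂ) : (toQ z).imJ = 0 := rfl
@[simp] lemma toQ_imK (z : ℂ) : (toQ z).imK = 0 := rfl
@[simp] lemma quatJ_re : quatJ.re = 0 := rfl
@[simp] lemma quatJ_imI : quatJ.imI = 0 := rfl
@[simp] lemma quatJ_imJ : quatJ.imJ = 1 := rfl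
@[simp] lemma quatJ_imK : quatJ.imK = 0 := rfl

@[simp] lemma c1_re (a : ℍ[ℝ]) : (c1 a).re = a.re := rfl
@[simp] lemma c1_im (a : ℍ[ℝ]) : (c1 a).im = a.imI := rfl
@[simp] lemma c2_re (a : ℍ[ℝ]) : (c2 a).re = a.imJ := rfl
@[simp] lemma c2_im (a : ℍ[ℝ]) : (c2 a).im = a.imK := rfl

@[simp] lemma c1_add (a b : ℍ[ℝ]) : c1 (a + b) = c1 a + c1 b := rfl
@[simp] lemma c2_add (a b : ℍ[ℝ]) : c2 (a + b) = c2 a + c2 b := rfl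
@[simp] lemma c1_smul (r : ℝ) (a : ℍ[ℝ]) : c1 (r • a) = r * c1 a := by
  apply Complex.ext <;> simp
@[simp] lemma c2_smul (r : ℝ) (a : ℍ[ℝ]) : c2 (r • a) = r * c2 a := by
  apply Complex.ext <;> simp

lemma c1_mul (a b : ℍ[ℝ]) : c1 (a * b) = c1 a * c1 b - c2 a * conj (c2 b) := by
  apply Complex.ext <;> simp <;> ring

lemma c2_mul (a b : ℍ[ℝ]) : c2 (a * b) = c1 a * c2 b + c2 a * conj (c1 b) := by
  apply Complex.ext <;> simp <;> ring

@[simp] lemma c1_toQ (z : ℂ) : c1 (toQ z) = z := rfl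
@[simp] lemma c2_toQ (z : ℂ) : c2 (toQ z) = 0 := rfl

@[simp] lemma c1_quatJ : c1 quatJ = 0 := rfl
@[simp] lemma c2_quatJ : c2 quatJ = 1 := rfl

lemma toQ_c1_add_toQ_c2_mul_quatJ (a : ℍ[ℝ]) : toQ (c1 a) + toQ (c2 a) * quatJ = a := by
  ext <;> simp

lemma c1_sum {ι : Type*} (s : Finset ι) (f : ι → ℍ[ℝ]) :
    c1 (∑ i ∈ s, f i) = ∑ i ∈ s, c1 (f i) := by
  apply Complex.ext <;> simp only [c1_re, c1_im, Complex.re_sum, Complex.im_sum]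
  exacts [map_sum (QuaternionAlgebra.reₗ _ _ _) f s, map_sum (QuaternionAlgebra.imIₗ _ _ _) f s]

lemma c2_sum {ι : Type*} (s : Finset ι) (f : ι → ℍ[ℝ]) :
    c2 (∑ i ∈ s, f i) = ∑ i ∈ s, c2 (f i) := by
  apply Complex.ext <;> simp only [c2_re, c2_im, Complex.re_sum, Complex.im_sum]
  exacts [map_sum (QuaternionAlgebra.imJₗ _ _ _) f s, map_sum (QuaternionAlgebra.imKₗ _ _ _) f s]

section ComplexCoords

variable {ι : Type*}

-- The sign in the second block is what makes `fAdj A` represent `A` (`complexCoords_mulVec`).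
def complexCoords : (ι → ℍ[ℝ]) ≃ₗ[ℝ] (ι ⊕ ι → ℂ) where
  toFun x := Sum.elim (fun i => c1 (x i)) (fun i => -conj (c2 (x i)))
  invFun w i := ⟨(w (.inl i)).re, (w (.inl i)).im, -(w (.inr i)).re, (w (.inr i)).im⟩
  map_add' x y := by ext (i | i) <;> simp [add_comm]
  map_smul' r x := by ext (i | i) <;> simp
  left_inv x := by ext i <;> simp
  right_inv w := by ext (i | i) <;> apply Complex.ext <;> simp [c1, c2]

@[simp] lemma complexCoords_inl (x : ι → ℍ[ℝ]) (i : ι) :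
    complexCoords x (.inl i) = c1 (x i) := rfl
@[simp] lemma complexCoords_inr (x : ι → ℍ[ℝ]) (i : ι) :
    complexCoords x (.inr i) = -conj (c2 (x i)) := rfl

-- Right multiplication by `j`, read in the coordinates `complexCoords`.
def conjSwap : (ι ⊕ ι → ℂ) ≃ₗ[ℝ] (ι ⊕ ι → ℂ) where
  toFun w := Sum.elim (fun i => conj (w (.inr i))) (fun i => -conj (w (.inl i)))
  invFun w := Sum.elim (fun i => -conj (w (.inr i))) (fun i => conj (w (.inl i)))
  map_add' w v := by ext (i | i) <;> simp [add_comm]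
  map_smul' r w := by ext (i | i) <;> simp
  left_inv w := by ext (i | i) <;> simp
  right_inv w := by ext (i | i) <;> simp

@[simp] lemma conjSwap_inl (w : ι ⊕ ι → ℂ) (i : ι) :
    conjSwap w (.inl i) = conj (w (.inr i)) := rfl
@[simp] lemma conjSwap_inr (w : ι ⊕ ι → ℂ) (i : ι) :
    conjSwap w (.inr i) = -conj (w (.inl i)) := rfl

lemma conjSwap_smul (z : ℂ) (w : ι ⊕ ι → ℂ) : conjSwap (z • w) = conj z • conjSwap w := by
  ext (i | i) <;> simp

lemma conjSwap_conjSwap (w : ι ⊕ ι → ℂ) : conjSwap (conjSwap w) = -w := by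
  ext (i | i) <;> simp

lemma complexCoords_op_toQ_smul (z : ℂ) (x : ι → ℍ[ℝ]) :
    complexCoords (op (toQ z) • x) = z • complexCoords x := by
  ext (i | i) <;> simp [c1_mul, c2_mul, mul_comm]

lemma complexCoords_op_quatJ_smul (x : ι → ℍ[ℝ]) :
    complexCoords (op quatJ • x) = conjSwap (complexCoords x) := by
  ext (i | i) <;> simp [c1_mul, c2_mul]

lemma complexCoords_op_smul (h : ℍ[ℝ]) (x : ι → ℍ[ℝ]) :
    complexCoords (op h • x) =
      c1 h • complexCoords x + conjSwap (c2 h • complexCoords x) := by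
  conv_lhs => rw [← toQ_c1_add_toQ_c2_mul_quatJ h]
  rw [op_add, add_smul, op_mul, mul_smul, map_add, complexCoords_op_toQ_smul,
    complexCoords_op_quatJ_smul, complexCoords_op_toQ_smul]

end ComplexCoords

section Adjoint

variable {n : ℕ}

lemma complexCoords_mulVec (A : Matrix (Fin n) (Fin n) ℍ[ℝ]) (x : Fin n → ℍ[ℝ]) :
    complexCoords (A *ᵥ x) = fAdj A *ᵥ complexCoords x := by
  ext (i | i)
  · simp only [fAdj, mulVec, dotProduct, Fintype.sum_sum_type, fromBlocks_apply₁₁,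
      fromBlocks_apply₁₂, complexCoords_inl, complexCoords_inr, c1_sum, c1_mul, map_apply,
      ← Finset.sum_add_distrib]
    refine Finset.sum_congr rfl fun j _ => ?_
    ring
  · simp only [fAdj, mulVec, dotProduct, Fintype.sum_sum_type, fromBlocks_apply₂₁,
      fromBlocks_apply₂₂, complexCoords_inl, complexCoords_inr, c2_sum, c2_mul, map_apply,
      Matrix.neg_apply, map_sum, ← Finset.sum_add_distrib, ← Finset.sum_neg_distrib]
    refine Finset.sum_congr rfl fun j _ => ?_
    simp only [map_add, map_mul, conj_conj]
    ring

lemma fAdj_mulVec_conjSwap (A : Matrix (Fin n) (Fin n) ℍ[ℝ]) (w : Fin n ⊕ Fin n → ℂ) :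
    fAdj A *ᵥ conjSwap w = conjSwap (fAdj A *ᵥ w) := by
  obtain ⟨x, rfl⟩ := complexCoords.surjective w
  rw [← complexCoords_op_quatJ_smul, ← complexCoords_mulVec, ← complexCoords_mulVec,
    mulVec_smul, complexCoords_op_quatJ_smul]

end Adjoint

local notation "Eig[" A ", " μ "]" => eigenspace (toLin' (fAdj A)) μ

lemma geoMult_eq_finrank_eigenspace {m : Type*} [Fintype m] [DecidableEq m] (B : Matrix m m ℂ)
    (μ : ℂ) : geoMult B μ = Module.finrank ℂ (eigenspace (toLin' B) μ) := by
  rw [geoMult, eigenspace_def, ← toLin'_apply', map_sub, map_smul, toLin'_one]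
  rfl

section Eigenspaces

variable {n : ℕ} {A : Matrix (Fin n) (Fin n) ℍ[ℝ]}

lemma mem_eigSet_iff {q : ℍ[ℝ]} {x : Fin n → ℍ[ℝ]} : x ∈ eigSet A q ↔ A *ᵥ x = op q • x :=
  Iff.rfl

lemma mem_eigSet_toQ_iff {μ : ℂ} {x : Fin n → ℍ[ℝ]} :
    x ∈ eigSet A (toQ μ) ↔ complexCoords x ∈ Eig[A, μ] := by
  rw [mem_eigSet_iff, mem_eigenspace_iff, toLin'_apply, ← complexCoords_mulVec,
    ← complexCoords_op_toQ_smul, complexCoords.injective.eq_iff]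

lemma conjSwap_mem_eigenspace {μ : ℂ} {w : Fin n ⊕ Fin n → ℂ}
    (hw : w ∈ Eig[A, μ]) : conjSwap w ∈ Eig[A, conj μ] := by
  rw [mem_eigenspace_iff, toLin'_apply] at hw ⊢
  rw [fAdj_mulVec_conjSwap, hw, conjSwap_smul]

lemma map_conjSwap_eigenspace (μ : ℂ) :
    (Eig[A, μ].restrictScalars ℝ).map conjSwap.toLinearMap = Eig[A, conj μ].restrictScalars ℝ := by
  refine le_antisymm (Submodule.map_le_iff_le_comap.mpr fun w hw => conjSwap_mem_eigenspace hw)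
    fun w hw => ⟨-conjSwap w, ?_, by simp [conjSwap_conjSwap]⟩
  have := conjSwap_mem_eigenspace hw
  rw [conj_conj] at this
  exact Submodule.neg_mem _ this

end Eigenspaces

lemma qSimilar.symm {p q : ℍ[ℝ]} (h : qSimilar p q) : qSimilar q p := by
  obtain ⟨a, ha, rfl⟩ := h
  exact ⟨a⁻¹, inv_ne_zero ha, by simp [mul_assoc, ha]⟩

lemma qSimilar.trans {p q r : ℍ[ℝ]} (hpq : qSimilar p q) (hqr : qSimilar q r) :
    qSimilar p r := by
  obtain ⟨a, ha, rfl⟩ := hpq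
  obtain ⟨b, hb, rfl⟩ := hqr
  exact ⟨b * a, mul_ne_zero hb ha, by simp [mul_assoc]⟩

section Vclass

variable {n : ℕ} {A : Matrix (Fin n) (Fin n) ℍ[ℝ]}

lemma op_smul_mem_eigSet_conj {p h : ℍ[ℝ]} (hh : h ≠ 0) {x : Fin n → ℍ[ℝ]}
    (hx : x ∈ eigSet A (h⁻¹ * p * h)) : op h⁻¹ • x ∈ eigSet A p := by
  rw [mem_eigSet_iff] at hx ⊢
  rw [mulVec_smul, hx, smul_smul, smul_smul, ← op_mul, ← op_mul]
  simp [mul_assoc, hh]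

lemma Vclass_eq_span_eigSet {q p : ℍ[ℝ]} (hqp : qSimilar q p) :
    Vclass A q = Submodule.span ℍ[ℝ]ᵐᵒᵖ (eigSet A p) := by
  refine le_antisymm (Submodule.span_le.mpr ?_) (Submodule.span_mono ?_)
  · simp only [Set.iUnion_subset_iff]
    rintro q' hq' x hx
    obtain ⟨h, hh, rfl⟩ := qSimilar.trans hq' hqp
    have hx' : x = op h • op h⁻¹ • x := by simp [smul_smul, hh]
    rw [hx']
    exact Submodule.smul_mem _ _ (Submodule.subset_span (op_smul_mem_eigSet_conj hh hx))
  · exact Set.subset_biUnion_of_mem (u := fun q' => eigSet A q') hqp.symm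

end Vclass

section Image

variable {n : ℕ} {A : Matrix (Fin n) (Fin n) ℍ[ℝ]} {μ : ℂ}

lemma conjSwap_mem_eigenspace_sup {w : Fin n ⊕ Fin n → ℂ}
    (hw : w ∈ Eig[A, μ] ⊔ Eig[A, conj μ]) :
    conjSwap w ∈ Eig[A, μ] ⊔ Eig[A, conj μ] := by
  obtain ⟨y, hy, z, hz, rfl⟩ := Submodule.mem_sup.mp hw
  have hz' := conjSwap_mem_eigenspace hz
  rw [conj_conj] at hz'
  rw [map_add, add_comm]
  exact Submodule.add_mem_sup hz' (conjSwap_mem_eigenspace hy)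

lemma complexCoords_mem_eigenspace_sup {x : Fin n → ℍ[ℝ]}
    (hx : x ∈ Submodule.span ℍ[ℝ]ᵐᵒᵖ (eigSet A (toQ μ))) :
    complexCoords x ∈ Eig[A, μ] ⊔ Eig[A, conj μ] := by
  induction hx using Submodule.span_induction with
  | mem x hx => exact Submodule.mem_sup_left (mem_eigSet_toQ_iff.mp hx)
  | zero => simp
  | add x y _ _ hx hy => simpa using Submodule.add_mem _ hx hy
  | smul c x _ hx =>
    rw [← op_unop c, complexCoords_op_smul]
    exact Submodule.add_mem _ (Submodule.smul_mem _ _ hx)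
      (conjSwap_mem_eigenspace_sup (Submodule.smul_mem _ _ hx))

lemma map_complexCoords_Vclass {q : ℍ[ℝ]} (hsim : qSimilar q (toQ μ)) :
    ((Vclass A q).restrictScalars ℝ).map complexCoords.toLinearMap =
      (Eig[A, μ] ⊔ Eig[A, conj μ]).restrictScalars ℝ := by
  rw [Vclass_eq_span_eigSet hsim]
  refine le_antisymm ?_ ?_
  · rintro _ ⟨x, hx, rfl⟩
    exact complexCoords_mem_eigenspace_sup hx
  · have hE : ∀ y ∈ Eig[A, μ],
        complexCoords.symm y ∈ Submodule.span ℍ[ℝ]ᵐᵒᵖ (eigSet A (toQ μ)) := fun y hy =>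
      Submodule.subset_span (mem_eigSet_toQ_iff.mpr (by simpa using hy))
    rw [Submodule.restrictScalars_sup, sup_le_iff, ← map_conjSwap_eigenspace]
    constructor
    · intro y hy
      exact ⟨_, hE y hy, by simp⟩
    · rintro _ ⟨y, hy, rfl⟩
      refine ⟨op quatJ • complexCoords.symm y, Submodule.smul_mem _ _ (hE y hy), ?_⟩
      simp [complexCoords_op_quatJ_smul]

end Image

lemma Submodule.finrank_restrictScalars_eq_mul {K R M : Type*} [DivisionRing K] [DivisionRing R]
    [AddCommGroup M] [Module K R] [Module R M] [Module K M] [IsScalarTower K R M]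
    (p : Submodule R M) :
    Module.finrank K (p.restrictScalars K) = Module.finrank K R * Module.finrank R p := by
  rw [((p.restrictScalarsEquiv K R M).restrictScalars K).finrank_eq,
    Module.finrank_mul_finrank]

section Dimension

variable {n : ℕ} {A : Matrix (Fin n) (Fin n) ℍ[ℝ]}

lemma four_mul_gm_eq_two_mul_finrank {q : ℍ[ℝ]} {μ : ℂ} (hsim : qSimilar q (toQ μ)) :
    4 * gm A q = 2 * Module.finrank ℂ ↥(Eig[A, μ] ⊔ Eig[A, conj μ]) := by
  have hquat : Module.finrank ℝ ℍ[ℝ]ᵐᵒᵖ = 4 := by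
    rw [MulOpposite.finrank, Quaternion.finrank_eq_four]
  rw [gm, ← hquat, ← Complex.finrank_real_complex, ← Submodule.finrank_restrictScalars_eq_mul,
    ← Submodule.finrank_restrictScalars_eq_mul, ← map_complexCoords_Vclass hsim,
    LinearEquiv.finrank_map_eq]

lemma finrank_eigenspace_conj (μ : ℂ) :
    Module.finrank ℂ Eig[A, conj μ] = Module.finrank ℂ Eig[A, μ] := by
  have h := conjSwap.finrank_map_eq (Eig[A, μ].restrictScalars ℝ)
  rw [map_conjSwap_eigenspace, Submodule.finrank_restrictScalars_eq_mul,
    Submodule.finrank_restrictScalars_eq_mul] at h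
  exact Nat.eq_of_mul_eq_mul_left (by simp) h

lemma finrank_eigenspace_sup_conj {μ : ℂ} (hμ : conj μ ≠ μ) :
    Module.finrank ℂ ↥(Eig[A, μ] ⊔ Eig[A, conj μ]) = 2 * Module.finrank ℂ Eig[A, μ] := by
  have hdisj := (eigenspaces_iSupIndep (toLin' (fAdj A))).pairwiseDisjoint hμ.symm
  have hsum := Submodule.finrank_sup_add_finrank_inf_eq
    Eig[A, μ] Eig[A, conj μ]
  rw [hdisj.eq_bot, finrank_bot, add_zero, finrank_eigenspace_conj] at hsum
  omega

end Dimension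

theorem geoMult_eq_complex_general {n : ℕ} (A : Matrix (Fin n) (Fin n) ℍ[ℝ])
    (q : ℍ[ℝ]) (lq : ℂ)
    (hsim : qSimilar q (toQ lq)) :
    (0 < lq.im → gm A q = geoMult (fAdj A) lq) ∧
    (lq.im = 0 → 2 * gm A q = geoMult (fAdj A) lq) := by
  have hgm := four_mul_gm_eq_two_mul_finrank (A := A) hsim
  rw [geoMult_eq_finrank_eigenspace]
  refine ⟨fun him => ?_, fun him => ?_⟩
  · rw [finrank_eigenspace_sup_conj fun h => him.ne' (conj_eq_iff_im.mp h)] at hgm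
    omega
  · rw [conj_eq_iff_im.mpr him, sup_idem] at hgm
    omega

/-- The geometric multiplicity g.m.(q,A) = dim_ℍ V_{[q]} equals g.m.(λ_q, f(A)) when
Im λ_q > 0, and half of it when λ_q is real. -/
theorem geoMult_eq_complex {n : ℕ} (A : Matrix (Fin n) (Fin n) ℍ[ℝ])
    (q : ℍ[ℝ]) (hq : RightEig A q) (lq : ℂ) (him : 0 ≤ lq.im)
    (hsim : qSimilar q (toQ lq)) :
    (0 < lq.im → gm A q = geoMult (fAdj A) lq) ∧
    (lq.im = 0 → 2 * gm A q = geoMult (fAdj A) lq) :=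
  geoMult_eq_complex_general A q lq hsim
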